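/- Let A be a semiperfect noetherian ring with Jacobson radical J and M a finitely generated A-module. Then proj dim_A M equals sup{0} ∪ {i : Ext_A^i(M, J) ≠ 0}; in particular, proj dim_A M is finite if and only if Ext_A^i(M, J) = 0 for all i ≫ 0. -/

import Mathlib

open CategoryTheory Limits Opposite

universe u

noncomputable section

namespace Paper

variable (A : Type u) [Ring A]

/-- The `i`-th Ext group `Ext_A^i(M,N)` vanishes. -/
def extVanish (M N : ModuleCat.{u} A) (i : ℕ) : Prop :=
  Subsingleton (((Ext ℤ (ModuleCat.{u} A) i).obj (op M)).obj N)

/-- Projective dimension at most `d`, characterized by Ext vanishing. -/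
def projDimLE (M : ModuleCat.{u} A) (d : ℕ) : Prop :=
  ∀ (N : ModuleCat.{u} A) (i : ℕ), d < i → extVanish A M N i

/-- Projective dimension, as an element of `ℕ∞` (`⊤` if infinite). -/
def projDim (M : ModuleCat.{u} A) : ℕ∞ :=
  sInf {c : ℕ∞ | ∃ d : ℕ, c = d ∧ projDimLE A M d}

/-- Injective dimension at most `d`, characterized by Ext vanishing. -/
def injDimLE (N : ModuleCat.{u} A) (d : ℕ) : Prop :=
  ∀ (M : ModuleCat.{u} A) (i : ℕ), d < i → extVanish A M N i

/-- Injective dimension, as an element of `ℕ∞` (`⊤` if infinite). -/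
def injDim (N : ModuleCat.{u} A) : ℕ∞ :=
  sInf {c : ℕ∞ | ∃ d : ℕ, c = d ∧ injDimLE A N d}

/-- (Left) global dimension. -/
def glDim : ℕ∞ := ⨆ M : ModuleCat.{u} A, projDim A M

/-- `p : P →ₗ[A] M` is a projective cover: `P` is projective, `p` is surjective and
its kernel is superfluous (small) in `P`. -/
def IsProjectiveCover {M P : Type u} [AddCommGroup M] [Module A M]
    [AddCommGroup P] [Module A P] (p : P →ₗ[A] M) : Prop :=
  Module.Projective A P ∧ Function.Surjective p ∧
    ∀ N : Submodule A P, N ⊔ LinearMap.ker p = ⊤ → N = ⊤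

/-- A ring is semiperfect if every finitely generated (left) module admits a
projective cover. -/
def IsSemiperfectRing : Prop :=
  ∀ (M : Type u) (_ : AddCommGroup M) (_ : Module A M), Module.Finite A M →
    ∃ (P : Type u) (_ : AddCommGroup P) (_ : Module A P) (p : P →ₗ[A] M),
      IsProjectiveCover A p

/-- The Jacobson radical of the ring `A`. -/
def jac : Ideal A := (⊥ : Ideal A).jacobson

/-- `p : P ⟶ M` in `ModuleCat A` is a projective cover. -/
def IsProjectiveCoverHom {P M : ModuleCat.{u} A} (p : P ⟶ M) : Prop :=
  Projective P ∧ Function.Surjective p ∧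
    ∀ N : Submodule A P, N ⊔ LinearMap.ker p.hom = ⊤ → N = ⊤

/-- `IsSyzygy n M K` : `K` is an `n`-th syzygy of `M` with respect to a minimal
projective resolution (built from projective covers). -/
def IsSyzygy : ℕ → ModuleCat.{u} A → ModuleCat.{u} A → Prop
  | 0, M, K => Nonempty (K ≅ M)
  | n + 1, M, K => ∃ (P : ModuleCat.{u} A) (p : P ⟶ M), IsProjectiveCoverHom A p ∧
      IsSyzygy n (ModuleCat.of A (LinearMap.ker p.hom)) K

/-- Dominant dimension at least `n`: there is an injective coresolution whose first
`n` terms are projective-injective (equivalently, the first `n` terms of the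
minimal injective coresolution are projective). -/
def DomDimGE : ℕ → ModuleCat.{u} A → Prop
  | 0, _ => True
  | n + 1, M => ∃ (I : ModuleCat.{u} A) (f : M ⟶ I), Injective I ∧ Projective I ∧
      Mono f ∧ DomDimGE n (cokernel f)

/-- Dominant dimension. -/
def domDim (M : ModuleCat.{u} A) : ℕ∞ :=
  sSup {c : ℕ∞ | ∃ n : ℕ, c = n ∧ DomDimGE A n M}

/-- Codominant dimension at least `n` (dual to dominant dimension, via projective
resolutions with projective-injective terms). -/
def CodomDimGE : ℕ → ModuleCat.{u} A → Prop
  | 0, _ => True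
  | n + 1, M => ∃ (P : ModuleCat.{u} A) (f : P ⟶ M), Projective P ∧ Injective P ∧
      Epi f ∧ CodomDimGE n (kernel f)

/-- Codominant dimension. -/
def codomDim (M : ModuleCat.{u} A) : ℕ∞ :=
  sSup {c : ℕ∞ | ∃ n : ℕ, c = n ∧ CodomDimGE A n M}

/-- A module is Gorenstein injective if it is a cycle of an acyclic complex of
injectives which stays acyclic after applying `Hom(I,-)` for every injective `I`. -/
def GorensteinInjective (N : ModuleCat.{u} A) : Prop :=
  ∃ C : CochainComplex (ModuleCat.{u} A) ℤ,
    (∀ n : ℤ, Injective (C.X n)) ∧ (∀ n : ℤ, C.ExactAt n) ∧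
    Nonempty (N ≅ kernel (C.d 0 1)) ∧
    ∀ (I : ModuleCat.{u} A), Injective I → ∀ n : ℤ,
      ((((preadditiveCoyoneda.obj (op I)).mapHomologicalComplex
        (ComplexShape.up ℤ)).obj C).ExactAt n)

/-- Gorenstein injective dimension at most `d`: there is a coresolution of length
at most `d` by Gorenstein injective modules. -/
def GinjDimLE : ℕ → ModuleCat.{u} A → Prop
  | 0, N => GorensteinInjective A N
  | n + 1, N => GorensteinInjective A N ∨
      ∃ (G : ModuleCat.{u} A) (f : N ⟶ G), GorensteinInjective A G ∧ Mono f ∧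
        GinjDimLE n (cokernel f)

/-- Gorenstein injective dimension, as an element of `ℕ∞`. -/
def ginjDim (N : ModuleCat.{u} A) : ℕ∞ :=
  sInf {c : ℕ∞ | ∃ d : ℕ, c = d ∧ GinjDimLE A d N}

/-- Finitistic projective dimension: the supremum of the projective dimensions of
finitely generated modules of finite projective dimension. -/
def fpDim : ℕ∞ :=
  sSup {c : ℕ∞ | ∃ M : ModuleCat.{u} A, Module.Finite A M ∧ projDim A M = c ∧ c ≠ ⊤}

/-- Finitistic injective dimension: the supremum of the injective dimensions of
finitely generated modules of finite injective dimension. -/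
def fiDim : ℕ∞ :=
  sSup {c : ℕ∞ | ∃ M : ModuleCat.{u} A, Module.Finite A M ∧ injDim A M = c ∧ c ≠ ⊤}

/-- A ring is connected (indecomposable) if it is nontrivial and has no nontrivial
central idempotents. -/
def RingConnected : Prop :=
  Nontrivial A ∧ ∀ e : A, IsIdempotentElem e → e ∈ Subring.center A → e = 0 ∨ e = 1

/-- Iwanaga-Gorenstein: noetherian on both sides, with finite self-injective
dimension on both sides. -/
def IsIwanagaGorenstein : Prop :=
  IsNoetherianRing A ∧ IsNoetherianRing Aᵐᵒᵖ ∧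
    injDim A (ModuleCat.of A A) ≠ ⊤ ∧ injDim Aᵐᵒᵖ (ModuleCat.of Aᵐᵒᵖ Aᵐᵒᵖ) ≠ ⊤

/-- Minimal Auslander-Gorenstein: Iwanaga-Gorenstein with `inj dim A ≤ dom dim A`. -/
def IsMinimalAuslanderGorenstein : Prop :=
  IsIwanagaGorenstein A ∧ injDim A (ModuleCat.of A A) ≤ domDim A (ModuleCat.of A A)

end Paper

/-!
Over a semiperfect ring a finitely generated module `M` has a minimal projective resolution
`⋯ → P₁ → P₀ → M` built from projective covers, so each syzygy `Ωⁿ⁺¹ = ker (Pₙ → Ωⁿ)` is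
superfluous in `Pₙ` and therefore lies in the radical of `Pₙ`. If `Ext^{n+1}(M, J) = 0`, every
map `Ωⁿ⁺¹ → J` extends to `Pₙ`. Extending the coordinate functions of a finite dual basis of `Pₙ`
gives an endomorphism `G` of `Pₙ` that is the identity on `Ωⁿ⁺¹` and has image in `J Pₙ`. By
Nakayama `1 - G` is surjective, hence injective because `Pₙ` is noetherian, so `Ωⁿ⁺¹ = 0`. The
resolution then stops at `Pₙ` and `proj dim M ≤ n`; the reverse inequality holds by definition.
-/

open Paper

namespace Submodule

variable {R M : Type*} [Ring R] [AddCommGroup M] [Module R M]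

theorem le_jacobson_of_sup_eq_top {K : Submodule R M}
    (hK : ∀ N : Submodule R M, N ⊔ K = ⊤ → N = ⊤) : K ≤ Module.jacobson R M :=
  le_sInf fun m hm => by
    by_contra hKm
    exact hm.1 (hK m (hm.2 _ (left_lt_sup.2 hKm)))

theorem eq_top_of_sup_jacobson_smul_eq_top [Module.Finite R M] {N : Submodule R M}
    (h : N ⊔ Ring.jacobson R • ⊤ = ⊤) : N = ⊤ := by
  have hQ : (⊤ : Submodule R (M ⧸ N)) ≤ Ring.jacobson R • ⊤ := by
    have := congrArg (map N.mkQ) h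
    rw [map_sup, map_smul'', mkQ_map_self, bot_sup_eq, map_top, range_mkQ] at this
    exact this.ge
  have := FG.eq_bot_of_le_jacobson_smul Module.Finite.fg_top hQ
  rw [← Quotient.subsingleton_iff, ← subsingleton_iff R, ← subsingleton_iff_bot_eq_top]
  exact this.symm

end Submodule

theorem Module.Projective.exists_finite_dual_basis {R P : Type*} [Ring R] [AddCommGroup P]
    [Module R P] [Module.Finite R P] [Module.Projective R P] :
    ∃ (n : ℕ) (x : Fin n → P) (φ : Fin n → P →ₗ[R] R), ∀ p, ∑ i, φ i p • x i = p := by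
  obtain ⟨n, π, hπ⟩ := Module.Finite.exists_fin' R P
  obtain ⟨s, hs⟩ := Module.projective_lifting_property π LinearMap.id hπ
  refine ⟨n, fun i => π (Pi.single i 1), fun i => LinearMap.proj i ∘ₗ s, fun p => ?_⟩
  calc ∑ i, s p i • π (Pi.single i 1) = π (∑ i, Pi.single i (s p i)) := by
        rw [map_sum]
        refine Finset.sum_congr rfl fun i _ => ?_
        rw [← map_smul, ← Pi.single_smul, smul_eq_mul, mul_one]
    _ = p := by rw [Finset.univ_sum_single, ← LinearMap.comp_apply, hs, LinearMap.id_apply]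

theorem Submodule.eq_bot_of_le_jacobson_of_forall_exists_extend {R P : Type*} [Ring R]
    [IsNoetherianRing R] [AddCommGroup P] [Module R P] [Module.Finite R P]
    [Module.Projective R P] {K : Submodule R P} (hK : K ≤ Module.jacobson R P)
    (hext : ∀ f : K →ₗ[R] Ring.jacobson R, ∃ g : P →ₗ[R] Ring.jacobson R, g ∘ₗ K.subtype = f) :
    K = ⊥ := by
  obtain ⟨n, x, φ, hφ⟩ := Module.Projective.exists_finite_dual_basis (R := R) (P := P)
  have hφK (i : Fin n) (k : K) : φ i k ∈ Ring.jacobson R :=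
    Module.map_jacobson_le (φ i) ⟨k, hK k.2, rfl⟩
  choose g hg using fun i => hext ((φ i ∘ₗ K.subtype).codRestrict _ (hφK i))
  let G : P →ₗ[R] P := ∑ i, ((Ring.jacobson R).subtype ∘ₗ g i).smulRight (x i)
  have hGK (k : K) : G k = k := by
    conv_rhs => rw [← hφ k]
    simp only [G, LinearMap.sum_apply, LinearMap.smulRight_apply, LinearMap.comp_apply,
      Submodule.subtype_apply]
    refine Finset.sum_congr rfl fun i _ => ?_
    rw [show g i k = _ from LinearMap.congr_fun (hg i) k]
    rfl
  have hG (p : P) : G p ∈ Ring.jacobson R • (⊤ : Submodule R P) := by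
    simp only [G, LinearMap.sum_apply, LinearMap.smulRight_apply]
    exact Submodule.sum_mem _ fun i _ => Submodule.smul_mem_smul (g i p).2 Submodule.mem_top
  have hsurj : Function.Surjective (LinearMap.id - G : P →ₗ[R] P) := by
    rw [← LinearMap.range_eq_top]
    refine Submodule.eq_top_of_sup_jacobson_smul_eq_top (eq_top_iff.2 fun p _ => ?_)
    rw [← sub_add_cancel p (G p)]
    exact Submodule.add_mem_sup (LinearMap.mem_range_self _ p) (hG p)
  refine eq_bot_iff.2 fun k hk => ?_
  have hk0 : (LinearMap.id - G : P →ₗ[R] P) k = (LinearMap.id - G : P →ₗ[R] P) 0 := by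
    simp [hGK ⟨k, hk⟩]
  exact IsNoetherian.injective_of_surjective_endomorphism _ hsurj hk0

theorem Module.Finite.of_surjective_of_superfluous_ker {R P N : Type*} [Ring R]
    [AddCommGroup P] [Module R P] [AddCommGroup N] [Module R N] [Module.Finite R N]
    {p : P →ₗ[R] N} (hp : Function.Surjective p)
    (hker : ∀ L : Submodule R P, L ⊔ LinearMap.ker p = ⊤ → L = ⊤) : Module.Finite R P := by
  classical
  obtain ⟨S, hS⟩ := Module.Finite.fg_top (R := R) (M := N)
  refine ⟨⟨S.image (Function.surjInv hp), hker _ ?_⟩⟩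
  rw [← Submodule.comap_map_eq, Submodule.map_span, Finset.coe_image, ← Set.image_comp,
    (Function.rightInverse_surjInv hp).comp_eq_id, Set.image_id, hS, Submodule.comap_top]

namespace CategoryTheory.ProjectiveResolution

variable {R C : Type*} [Ring R] [Category C] [Abelian C] [Linear R C] [EnoughProjectives C]
  {X : C} (P : ProjectiveResolution X)

theorem isZero_ext_of_isZero {n : ℕ} (h : IsZero (P.complex.X n)) (Y : C) :
    IsZero (((Ext R C n).obj (op X)).obj Y) := by
  refine IsZero.of_iso ?_ (P.isoExt n Y)
  rw [← HomologicalComplex.exactAt_iff_isZero_homology, HomologicalComplex.exactAt_iff]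
  refine ShortComplex.exact_of_isZero_X₂ _ ?_
  rw [ModuleCat.isZero_iff_subsingleton]
  exact ⟨fun f g => h.eq_of_src f g⟩

theorem exists_d_comp_eq_of_isZero_ext {Y : C} {n : ℕ}
    (h : IsZero (((Ext R C (n + 1)).obj (op X)).obj Y))
    (f : P.complex.X (n + 1) ⟶ Y) (hf : P.complex.d (n + 2) (n + 1) ≫ f = 0) :
    ∃ g : P.complex.X n ⟶ Y, P.complex.d (n + 1) n ≫ g = f := by
  have hexact := (HomologicalComplex.exactAt_iff_isZero_homology _ _).2
    (h.of_iso (P.isoExt (R := R) (n + 1) Y).symm)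
  rw [HomologicalComplex.exactAt_iff' _ n (n + 1) (n + 2) (by simp) (by simp),
    ShortComplex.moduleCat_exact_iff] at hexact
  exact hexact f hf

end CategoryTheory.ProjectiveResolution

theorem Paper.IsProjectiveCoverHom.subsingleton {A : Type u} [Ring A] {P N : ModuleCat.{u} A}
    {p : P ⟶ N} (hp : IsProjectiveCoverHom A p) [Subsingleton N] : Subsingleton P := by
  have hker : LinearMap.ker p.hom = ⊤ := eq_top_iff.2 fun x _ => Subsingleton.elim _ _
  rw [← Submodule.subsingleton_iff A, ← subsingleton_iff_bot_eq_top]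
  exact hp.2.2 ⊥ (by rw [hker, sup_top_eq])

namespace Paper.IsSemiperfectRing

variable {A : Type u} [Ring A]

theorem exists_isProjectiveCoverHom (hA : IsSemiperfectRing A) (N : ModuleCat.{u} A)
    [Module.Finite A N] : ∃ (P : ModuleCat.{u} A) (p : P ⟶ N), IsProjectiveCoverHom A p := by
  obtain ⟨P, _, _, p, hproj, hsurj, hker⟩ := hA N inferInstance inferInstance inferInstance
  exact ⟨.of A P, ModuleCat.ofHom p, (IsProjective.iff_projective P).1 hproj, hsurj, hker⟩

variable (hA : IsSemiperfectRing A) (N : ModuleCat.{u} A) [Module.Finite A N]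

def cover : ModuleCat.{u} A := (hA.exists_isProjectiveCoverHom N).choose

def coverπ : hA.cover N ⟶ N := (hA.exists_isProjectiveCoverHom N).choose_spec.choose

theorem isProjectiveCoverHom_coverπ : IsProjectiveCoverHom A (hA.coverπ N) :=
  (hA.exists_isProjectiveCoverHom N).choose_spec.choose_spec

instance : Projective (hA.cover N) := (hA.isProjectiveCoverHom_coverπ N).1

instance : Module.Finite A (hA.cover N) :=
  .of_surjective_of_superfluous_ker (hA.isProjectiveCoverHom_coverπ N).2.1
    (hA.isProjectiveCoverHom_coverπ N).2.2

end Paper.IsSemiperfectRing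

namespace MinimalResolution

variable {A : Type u} [Ring A] [IsNoetherianRing A] (hA : IsSemiperfectRing A)
  (M : ModuleCat.{u} A) [Module.Finite A M]

def syzygyTower : ℕ → {N : ModuleCat.{u} A // Module.Finite A N}
  | 0 => ⟨M, inferInstance⟩
  | n + 1 =>
    have := (syzygyTower n).2
    ⟨.of A (LinearMap.ker (hA.coverπ (syzygyTower n).1).hom), inferInstance⟩

def syzygy (n : ℕ) : ModuleCat.{u} A := (syzygyTower hA M n).1

instance (n : ℕ) : Module.Finite A (syzygy hA M n) := (syzygyTower hA M n).2

def obj (n : ℕ) : ModuleCat.{u} A := hA.cover (syzygy hA M n)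

instance (n : ℕ) : Module.Finite A (obj hA M n) := inferInstanceAs (Module.Finite A (hA.cover _))

instance (n : ℕ) : Module.Projective A (obj hA M n) :=
  (IsProjective.iff_projective _).2 (inferInstanceAs (Projective (hA.cover _)))

def π (n : ℕ) : obj hA M n ⟶ syzygy hA M n := hA.coverπ (syzygy hA M n)

instance (n : ℕ) : Epi (π hA M n) :=
  (ModuleCat.epi_iff_surjective _).2 (hA.isProjectiveCoverHom_coverπ _).2.1

def ι (n : ℕ) : syzygy hA M (n + 1) ⟶ obj hA M n :=
  ModuleCat.ofHom (LinearMap.ker (π hA M n).hom).subtype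

def d (n : ℕ) : obj hA M (n + 1) ⟶ obj hA M n := π hA M (n + 1) ≫ ι hA M n

theorem ι_π (n : ℕ) : ι hA M n ≫ π hA M n = 0 := by
  ext ⟨x, hx⟩
  exact hx

theorem d_π (n : ℕ) : d hA M n ≫ π hA M n = 0 := by
  rw [d, Category.assoc, ι_π, comp_zero]

theorem d_d (n : ℕ) : d hA M (n + 1) ≫ d hA M n = 0 := by
  rw [show d hA M n = π hA M (n + 1) ≫ ι hA M n from rfl, ← Category.assoc, d_π, zero_comp]

theorem exists_d_eq (n : ℕ) (y : obj hA M n) (hy : π hA M n y = 0) : ∃ x, d hA M n x = y := by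
  obtain ⟨x, hx⟩ := (hA.isProjectiveCoverHom_coverπ (syzygy hA M (n + 1))).2.1 ⟨y, hy⟩
  exact ⟨x, congrArg Subtype.val hx⟩

theorem d_apply_eq_zero_iff (n : ℕ) (x : obj hA M (n + 1)) :
    d hA M n x = 0 ↔ π hA M (n + 1) x = 0 :=
  Submodule.coe_eq_zero

def complex : ChainComplex (ModuleCat.{u} A) ℕ := ChainComplex.of (obj hA M) (d hA M) (d_d hA M)

instance (n : ℕ) : Projective ((complex hA M).X n) := inferInstanceAs (Projective (hA.cover _))

theorem complex_d (n : ℕ) : (complex hA M).d (n + 1) n = d hA M n := ChainComplex.of_d _ _ n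

theorem complex_d_π (n : ℕ) : (complex hA M).d (n + 1) n ≫ π hA M n = 0 := by
  rw [complex_d]
  exact d_π hA M n

def resolution : ProjectiveResolution M where
  complex := complex hA M
  π := (ChainComplex.toSingle₀Equiv _ _).symm ⟨π hA M 0, complex_d_π hA M 0⟩
  quasiIso := ⟨fun n => by
    cases n with
    | zero =>
      rw [ChainComplex.quasiIsoAt₀_iff, ShortComplex.quasiIso_iff_of_zeros']
      · refine ⟨(ShortComplex.moduleCat_exact_iff _).2 fun (y : obj hA M 0) hy => ?_,
          (ModuleCat.epi_iff_surjective _).2 ?_⟩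
        · obtain ⟨x, rfl⟩ := exists_d_eq hA M 0 y hy
          exact ⟨x, ConcreteCategory.congr_hom (complex_d hA M 0) x⟩
        · exact (hA.isProjectiveCoverHom_coverπ (syzygy hA M 0)).2.1
      all_goals rfl
    | succ n =>
      rw [quasiIsoAt_iff_exactAt' _ _ (ChainComplex.exactAt_succ_single_obj _ n),
        HomologicalComplex.exactAt_iff' _ (n + 2) (n + 1) n (by simp) (by simp),
        ShortComplex.moduleCat_exact_iff]
      intro (y : obj hA M (n + 1)) hy
      have hy' : d hA M n y = 0 := by rw [← complex_d]; exact hy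
      obtain ⟨x, rfl⟩ := exists_d_eq hA M (n + 1) y ((d_apply_eq_zero_iff hA M n y).1 hy')
      exact ⟨x, ConcreteCategory.congr_hom (complex_d hA M (n + 1)) x⟩⟩

theorem ker_π_eq_bot_of_extVanish {n : ℕ}
    (hv : extVanish A M (.of A (Ring.jacobson A)) (n + 1)) : LinearMap.ker (π hA M n).hom = ⊥ := by
  refine Submodule.eq_bot_of_le_jacobson_of_forall_exists_extend
    (Submodule.le_jacobson_of_sup_eq_top (hA.isProjectiveCoverHom_coverπ _).2.2) fun f => ?_
  have hcocycle : (complex hA M).d (n + 2) (n + 1) ≫ π hA M (n + 1) ≫ ModuleCat.ofHom f = 0 :=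
    (Category.assoc _ _ _).symm.trans
      ((congrArg (· ≫ ModuleCat.ofHom f) (complex_d_π hA M (n + 1))).trans zero_comp)
  obtain ⟨g, hg⟩ := (resolution hA M).exists_d_comp_eq_of_isZero_ext
    (ModuleCat.isZero_iff_subsingleton.2 hv) _ hcocycle
  have hι : ι hA M n ≫ g = ModuleCat.ofHom f :=
    (cancel_epi (π hA M (n + 1))).1 <| (Category.assoc _ _ _).symm.trans <|
      (congrArg (· ≫ g) (complex_d hA M n)).symm.trans hg
  exact ⟨g.hom, congrArg ModuleCat.Hom.hom hι⟩

theorem subsingleton_obj_of_subsingleton_syzygy {n : ℕ} [Subsingleton (syzygy hA M (n + 1))] :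
    ∀ i, n < i → Subsingleton (obj hA M i) := by
  intro i hi
  induction i, hi using Nat.le_induction with
  | base => exact (hA.isProjectiveCoverHom_coverπ (syzygy hA M (n + 1))).subsingleton
  | succ i _ ih =>
    have : Subsingleton (syzygy hA M (i + 1)) :=
      inferInstanceAs (Subsingleton (LinearMap.ker (π hA M i).hom))
    exact (hA.isProjectiveCoverHom_coverπ (syzygy hA M (i + 1))).subsingleton

end MinimalResolution

open MinimalResolution in
theorem projDimLE_of_extVanish_jacobson {A : Type u} [Ring A] [IsNoetherianRing A]
    (hA : IsSemiperfectRing A) (M : ModuleCat.{u} A) [Module.Finite A M] {n : ℕ}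
    (hv : extVanish A M (.of A (Ring.jacobson A)) (n + 1)) : projDimLE A M n := by
  have : Subsingleton (syzygy hA M (n + 1)) :=
    Submodule.subsingleton_iff_eq_bot.2 (ker_π_eq_bot_of_extVanish hA M hv)
  intro N i hi
  have : Subsingleton ((resolution hA M).complex.X i) :=
    subsingleton_obj_of_subsingleton_syzygy hA M i hi
  exact ModuleCat.isZero_iff_subsingleton.1 <|
    (resolution hA M).isZero_ext_of_isZero (ModuleCat.isZero_of_subsingleton _) N

namespace ENat

theorem sInf_setOf_forall_lt_eq_sSup (Q : ℕ → Prop) :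
    sInf {c : ℕ∞ | ∃ d : ℕ, c = d ∧ ∀ i, d < i → Q i} =
      sSup ({0} ∪ {c : ℕ∞ | ∃ i : ℕ, c = i ∧ ¬ Q i}) := by
  refine le_antisymm ?_ (sSup_le ?_)
  · induction hs : sSup ({0} ∪ {c : ℕ∞ | ∃ i : ℕ, c = i ∧ ¬ Q i}) using ENat.recTopCoe with
    | top => exact le_top
    | coe d =>
      refine sInf_le ⟨d, rfl, fun i hi => by_contra fun hQ => hi.not_ge ?_⟩
      have hle : (i : ℕ∞) ≤ sSup ({0} ∪ {c : ℕ∞ | ∃ i : ℕ, c = i ∧ ¬ Q i}) :=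
        le_sSup (Or.inr ⟨i, rfl, hQ⟩)
      exact Nat.cast_le.1 (hs ▸ hle)
  · rintro _ (rfl | ⟨i, rfl, hQ⟩)
    · exact zero_le
    · refine le_sInf ?_
      rintro _ ⟨d, rfl, hd⟩
      exact Nat.cast_le.2 (not_lt.1 fun h => hQ (hd i h))

theorem sInf_setOf_ne_top_iff (P : ℕ → Prop) :
    sInf {c : ℕ∞ | ∃ d : ℕ, c = d ∧ P d} ≠ ⊤ ↔ ∃ d, P d := by
  simp [sInf_eq_top]

end ENat

open Paper in
theorem statement_4 (A : Type u) [Ring A] [IsNoetherianRing A]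
    (hA : IsSemiperfectRing A)
    (M : Type u) [AddCommGroup M] [Module A M] [Module.Finite A M] :
    projDim A (ModuleCat.of A M) =
      sSup ({0} ∪ {c : ℕ∞ | ∃ i : ℕ, c = i ∧
        ¬ extVanish A (ModuleCat.of A M) (ModuleCat.of A ↥(jac A)) i}) ∧
    (projDim A (ModuleCat.of A M) ≠ ⊤ ↔
      ∃ n : ℕ, ∀ i : ℕ, n ≤ i →
        extVanish A (ModuleCat.of A M) (ModuleCat.of A ↥(jac A)) i) := by
  have hiff (d : ℕ) : projDimLE A (.of A M) d ↔
      ∀ i, d < i → extVanish A (.of A M) (.of A (jac A)) i := by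
    refine ⟨fun h i hi => h _ i hi, fun h => projDimLE_of_extVanish_jacobson hA _ ?_⟩
    rw [jac, Ideal.jacobson_bot] at h
    exact h (d + 1) d.lt_succ_self
  simp only [projDim, hiff]
  refine ⟨ENat.sInf_setOf_forall_lt_eq_sSup _, (ENat.sInf_setOf_ne_top_iff _).trans ?_⟩
  exact ⟨fun ⟨d, hd⟩ => ⟨d + 1, fun i hi => hd i hi⟩, fun ⟨n, hn⟩ => ⟨n, fun i hi => hn i hi.le⟩⟩
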